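/- Let (X,d) be a Q-metric space over a continuous quantale. For every A ⊆ X, the closure of A in the dual open ball topology equals the intersection over all δ ≪ 1 of B_R(A, δ). -/

import Mathlib

def wayBelow {Q : Type*} [CompleteLattice Q] (x y : Q) : Prop :=
  ∀ D : Set Q, D.Nonempty → DirectedOn (· ≤ ·) D → y ≤ sSup D → ∃ d ∈ D, x ≤ d

def ContinuousLattice (Q : Type*) [CompleteLattice Q] : Prop :=
  ∀ y : Q, y = sSup {x : Q | wayBelow x y}

/-- The set of points belonging to `A` with precision greater than `δ`. -/
def BR {Q : Type*} [CompleteLattice Q] {X : Type*} (d : X → X → Q) (A : Set X) (δ : Q) :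
    Set X := {y : X | ∃ x ∈ A, wayBelow δ (d x y)}

/-- Dual open ball. -/
def dualBall {Q : Type*} [CompleteLattice Q] {X : Type*} (d : X → X → Q) (x : X) (δ : Q) :
    Set X := {y : X | wayBelow δ (d y x)}

/-- The dual open ball topology. -/
def dualBallTopology {Q : Type*} [Monoid Q] [CompleteLattice Q] {X : Type*}
    (d : X → X → Q) : TopologicalSpace X :=
  TopologicalSpace.generateFrom {B : Set X | ∃ x δ, wayBelow δ (1 : Q) ∧ B = dualBall d x δ}

/-!
In a continuous quantale every `c` is the directed join of the `u * c` with `u ≪ 1`, and `≪`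
interpolates; so `δ ≪ d y z` gives some `u ≪ 1` with `δ ≪ u * d y z ≤ d x z` whenever
`u ≪ d x y`. Hence every dual ball containing `y` contains a dual ball `B°(y, u)` centred at `y`
with `u ≪ 1`, and these balls form a neighbourhood base at `y`. Meeting `A` with each of them is
exactly membership of `y` in every `B_R(A, u)`.
-/

namespace wayBelow

variable {Q : Type*} [CompleteLattice Q] {x y z : Q}

lemma le (h : wayBelow x y) : x ≤ y := by
  obtain ⟨d, hd, hxd⟩ := h {y} ⟨y, rfl⟩ (directedOn_singleton y) sSup_singleton.ge
  rwa [Set.mem_singleton_iff.1 hd] at hxd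

lemma mono_left (hxy : x ≤ y) (h : wayBelow y z) : wayBelow x z := fun D hne hdir hle =>
  let ⟨d, hd, hyd⟩ := h D hne hdir hle
  ⟨d, hd, hxy.trans hyd⟩

lemma mono_right (h : wayBelow x y) (hyz : y ≤ z) : wayBelow x z :=
  fun D hne hdir hle => h D hne hdir (hyz.trans hle)

lemma sup (hx : wayBelow x z) (hy : wayBelow y z) : wayBelow (x ⊔ y) z := by
  intro D hne hdir hle
  obtain ⟨a, ha, hxa⟩ := hx D hne hdir hle
  obtain ⟨b, hb, hyb⟩ := hy D hne hdir hle
  obtain ⟨c, hc, hac, hbc⟩ := hdir a ha b hb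
  exact ⟨c, hc, sup_le (hxa.trans hac) (hyb.trans hbc)⟩

end wayBelow

lemma wayBelow_bot {Q : Type*} [CompleteLattice Q] (y : Q) : wayBelow ⊥ y :=
  fun _ ⟨a, ha⟩ _ _ => ⟨a, ha, bot_le⟩

lemma ContinuousLattice.exists_wayBelow_wayBelow {Q : Type*} [CompleteLattice Q]
    (hcont : ContinuousLattice Q) {x z : Q} (h : wayBelow x z) :
    ∃ y, wayBelow x y ∧ wayBelow y z := by
  let S : Set Q := {a | ∃ y, wayBelow a y ∧ wayBelow y z}
  have hdir : DirectedOn (· ≤ ·) S := by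
    rintro a ⟨y₁, ha, hy₁⟩ b ⟨y₂, hb, hy₂⟩
    exact ⟨a ⊔ b, ⟨y₁ ⊔ y₂, (ha.mono_right le_sup_left).sup (hb.mono_right le_sup_right),
      hy₁.sup hy₂⟩, le_sup_left, le_sup_right⟩
  have hle : z ≤ sSup S := by
    rw [hcont z]
    refine sSup_le fun y hy => ?_
    rw [hcont y]
    exact sSup_le fun a ha => le_sSup ⟨y, ha, hy⟩
  obtain ⟨a, ⟨y, hay, hyz⟩, hxa⟩ :=
    h S ⟨⊥, ⊥, wayBelow_bot _, wayBelow_bot _⟩ hdir hle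
  exact ⟨y, hay.mono_left hxa, hyz⟩

lemma ContinuousLattice.exists_wayBelow_one_wayBelow_mul {Q : Type*} [Monoid Q]
    [CompleteLattice Q] [IsQuantale Q] (hcont : ContinuousLattice Q) {δ c : Q}
    (h : wayBelow δ c) : ∃ u, wayBelow u (1 : Q) ∧ wayBelow δ (u * c) := by
  obtain ⟨μ, hδμ, hμc⟩ := hcont.exists_wayBelow_wayBelow h
  let S : Set Q := (· * c) '' {u | wayBelow u (1 : Q)}
  have hdir : DirectedOn (· ≤ ·) S := by
    rintro _ ⟨u, hu, rfl⟩ _ ⟨v, hv, rfl⟩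
    exact ⟨(u ⊔ v) * c, ⟨u ⊔ v, hu.sup hv, rfl⟩,
      mul_le_mul_left le_sup_left c, mul_le_mul_left le_sup_right c⟩
  have hc : c = sSup S := by
    conv_lhs => rw [← one_mul c, hcont 1]
    rw [sSup_mul_distrib, sSup_image]
  obtain ⟨_, ⟨u, hu, rfl⟩, hμu⟩ := hμc S ⟨⊥ * c, ⊥, wayBelow_bot _, rfl⟩ hdir hc.le
  exact ⟨u, hu, hδμ.mono_right hμu⟩

section DualBall

open Topology

variable {Q : Type*} [Monoid Q] [CompleteLattice Q] {X : Type*} {d : X → X → Q}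

lemma isOpen_dualBall (x : X) {δ : Q} (hδ : wayBelow δ (1 : Q)) :
    IsOpen[dualBallTopology d] (dualBall d x δ) :=
  TopologicalSpace.GenerateOpen.basic _ ⟨x, δ, hδ, rfl⟩

lemma mem_dualBall_self (hrefl : ∀ x : X, (1 : Q) ≤ d x x) (x : X) {δ : Q}
    (hδ : wayBelow δ (1 : Q)) : x ∈ dualBall d x δ :=
  hδ.mono_right (hrefl x)

lemma exists_dualBall_subset_dualBall [IsQuantale Q] (hcont : ContinuousLattice Q)
    (htri : ∀ x y z : X, d x y * d y z ≤ d x z) {y z : X} {δ : Q} (hy : y ∈ dualBall d z δ) :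
    ∃ u, wayBelow u (1 : Q) ∧ dualBall d y u ⊆ dualBall d z δ := by
  obtain ⟨u, hu, hδu⟩ := hcont.exists_wayBelow_one_wayBelow_mul hy
  refine ⟨u, hu, fun x hx => hδu.mono_right ?_⟩
  calc u * d y z ≤ d x y * d y z := mul_le_mul_left hx.le _
    _ ≤ d x z := htri x y z

lemma exists_dualBall_subset_of_isOpen [IsQuantale Q] (hcont : ContinuousLattice Q)
    (htri : ∀ x y z : X, d x y * d y z ≤ d x z) {o : Set X}
    (ho : IsOpen[dualBallTopology d] o) {y : X} (hy : y ∈ o) :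
    ∃ u, wayBelow u (1 : Q) ∧ dualBall d y u ⊆ o := by
  induction ho with
  | basic B hB =>
    obtain ⟨z, δ, -, rfl⟩ := hB
    exact exists_dualBall_subset_dualBall hcont htri hy
  | univ => exact ⟨⊥, wayBelow_bot _, Set.subset_univ _⟩
  | inter s t _ _ ihs iht =>
    obtain ⟨u, hu, hus⟩ := ihs hy.1
    obtain ⟨v, hv, hvt⟩ := iht hy.2
    exact ⟨u ⊔ v, hu.sup hv, fun x hx =>
      ⟨hus (wayBelow.mono_left le_sup_left hx), hvt (wayBelow.mono_left le_sup_right hx)⟩⟩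
  | sUnion S _ ih =>
    obtain ⟨t, ht, hyt⟩ := hy
    obtain ⟨u, hu, hut⟩ := ih t ht hyt
    exact ⟨u, hu, hut.trans (Set.subset_sUnion_of_mem ht)⟩

lemma nhds_hasBasis_dualBall [IsQuantale Q] (hcont : ContinuousLattice Q)
    (hrefl : ∀ x : X, (1 : Q) ≤ d x x) (htri : ∀ x y z : X, d x y * d y z ≤ d x z) (y : X) :
    (@nhds X (dualBallTopology d) y).HasBasis (fun u => wayBelow u (1 : Q)) (dualBall d y) := by
  let := dualBallTopology d
  refine ⟨fun t => ⟨fun ht => ?_, fun ⟨u, hu, hut⟩ => ?_⟩⟩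
  · obtain ⟨o, hot, ho, hyo⟩ := mem_nhds_iff.1 ht
    obtain ⟨u, hu, huo⟩ := exists_dualBall_subset_of_isOpen hcont htri ho hyo
    exact ⟨u, hu, huo.trans hot⟩
  · exact Filter.mem_of_superset
      ((isOpen_dualBall y hu).mem_nhds (mem_dualBall_self hrefl y hu)) hut

end DualBall

theorem dual_closure_eq_iInter_BR {Q : Type*} [Monoid Q] [CompleteLattice Q] [IsQuantale Q]
    (hcont : ContinuousLattice Q) {X : Type*} (d : X → X → Q)
    (hrefl : ∀ x : X, (1 : Q) ≤ d x x)
    (htri : ∀ x y z : X, d x y * d y z ≤ d x z) (A : Set X) :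
    @closure X (dualBallTopology d) A =
      ⋂ δ ∈ {δ : Q | wayBelow δ (1 : Q)}, BR d A δ := by
  let := dualBallTopology d
  ext y
  rw [mem_closure_iff_nhds_basis (nhds_hasBasis_dualBall hcont hrefl htri y)]
  simp only [Set.mem_iInter, Set.mem_ofPred_eq, BR, dualBall]
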